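/- arXiv:2203.02591 — 4 statements merged into one kernel-verified Lean document; each statement's English description precedes it below -/
import Mathlib

section
/- Let a, b, c, d, e, X, Z be nonnegative real numbers satisfying X ≤ a + b·√X + c·Z, Z ≤ d + e·X, and 2·c·e < 1. Then X ≤ (2a + b² + 2cd)/(1 − 2ce). -/
theorem mul_sqrt_le_sq_add_div_two (b : ℝ) {x : ℝ} (hx : 0 ≤ x) :
    b * √x ≤ (b ^ 2 + x) / 2 := by
  have := two_mul_le_add_sq b √x
  rw [Real.sq_sqrt hx] at this
  linarith

theorem nonlinear_small_gain_general (a b c d e X Z : ℝ)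
    (hc : 0 ≤ c)
    (hX : 0 ≤ X)
    (h1 : X ≤ a + b * Real.sqrt X + c * Z)
    (h2 : Z ≤ d + e * X)
    (hce : 2 * c * e < 1) :
    X ≤ (2 * a + b ^ 2 + 2 * c * d) / (1 - 2 * c * e) := by
  have hsqrt := mul_sqrt_le_sq_add_div_two b hX
  have hcZ := mul_le_mul_of_nonneg_left h2 hc
  rw [le_div_iff₀ (by linarith)]
  linarith

/-- Nonlinear small-gain theorem (Lemma 14 of the paper):
if `X ≤ a + b·√X + c·Z`, `Z ≤ d + e·X` and `2·c·e < 1`, then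
`X ≤ (2a + b² + 2cd)/(1 − 2ce)`. -/
theorem nonlinear_small_gain (a b c d e X Z : ℝ)
    (ha : 0 ≤ a) (hb : 0 ≤ b) (hc : 0 ≤ c) (hd : 0 ≤ d) (he : 0 ≤ e)
    (hX : 0 ≤ X) (hZ : 0 ≤ Z)
    (h1 : X ≤ a + b * Real.sqrt X + c * Z)
    (h2 : Z ≤ d + e * X)
    (hce : 2 * c * e < 1) :
    X ≤ (2 * a + b ^ 2 + 2 * c * d) / (1 - 2 * c * e) :=
  nonlinear_small_gain_general a b c d e X Z hc hX h1 h2 hce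
end

section
/- Let V : ℝⁿ → ℝ be differentiable with L-Lipschitz gradient (L > 0), let θ, d ∈ ℝⁿ, and let β be a real number with 0 ≤ β ≤ 1/(6L). Then V(θ − β·(∇V(θ) + d)) ≤ V(θ) − (β/4)·‖∇V(θ)‖² + β·‖d‖². -/
/-!
Expanding `V` to first order around `θ` by the mean value inequality, the Lipschitz gradient
controls the remainder by `L‖Δ‖²`. For the step `Δ = -β (∇V θ + d)` this leaves the quadratic form
`β (-(‖g‖² + ⟪g, d⟫) + Lβ ‖g + d‖²)` in `g = ∇V θ` and `d`, which Cauchy–Schwarz bounds by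
`β (-‖g‖²/4 + ‖d‖²)` as soon as `Lβ ≤ 1/2`.
-/

open InnerProductSpace

theorem le_add_inner_gradient_add_mul_norm_sq {F : Type*} [NormedAddCommGroup F]
    [InnerProductSpace ℝ F] [CompleteSpace F] {f : F → ℝ} {L : ℝ} (hL : 0 ≤ L)
    (hf : Differentiable ℝ f) (hLip : ∀ x y, ‖gradient f x - gradient f y‖ ≤ L * ‖x - y‖)
    (x y : F) :
    f y ≤ f x + ⟪gradient f x, y - x⟫_ℝ + L * ‖y - x‖ ^ 2 := by
  have hbound : ∀ z ∈ Metric.closedBall x ‖y - x‖,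
      ‖fderiv ℝ f z - fderiv ℝ f x‖ ≤ L * ‖y - x‖ := by
    intro z hz
    rw [← toDual_gradient, ← toDual_gradient, ← map_sub, LinearIsometryEquiv.norm_map]
    exact (hLip z x).trans (mul_le_mul_of_nonneg_left (by rwa [← dist_eq_norm]) hL)
  have hmvt := (convex_closedBall x ‖y - x‖).norm_image_sub_le_of_norm_fderiv_le'
    (fun z _ ↦ hf z) hbound (Metric.mem_closedBall_self (norm_nonneg _))
    (by rw [Metric.mem_closedBall, dist_eq_norm])
  rw [← inner_gradient_left, Real.norm_eq_abs] at hmvt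
  linarith [(abs_le.mp hmvt).2]

theorem neg_inner_add_mul_norm_add_sq_le {E : Type*} [NormedAddCommGroup E]
    [InnerProductSpace ℝ E] (g d : E) {c : ℝ} (hc : c ≤ 1 / 2) :
    -(‖g‖ ^ 2 + ⟪g, d⟫_ℝ) + c * ‖g + d‖ ^ 2 ≤ -(1 / 4) * ‖g‖ ^ 2 + ‖d‖ ^ 2 := by
  rw [norm_add_sq_real]
  have hcs := neg_le_of_abs_le (abs_real_inner_le_norm g d)
  nlinarith [sq_nonneg (‖g‖ - ‖d‖), mul_nonneg (norm_nonneg g) (norm_nonneg d)]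

theorem inexact_gradient_descent_step_general (n : ℕ) (L : ℝ)
    (V : EuclideanSpace ℝ (Fin n) → ℝ) (hV : Differentiable ℝ V)
    (hLip : ∀ x y : EuclideanSpace ℝ (Fin n),
      ‖gradient V x - gradient V y‖ ≤ L * ‖x - y‖)
    (θ d : EuclideanSpace ℝ (Fin n)) (β : ℝ) (hβ0 : 0 ≤ β) (hβ : β ≤ 1 / (6 * L)) :
    V (θ - β • (gradient V θ + d))
      ≤ V θ - (β / 4) * ‖gradient V θ‖ ^ 2 + β * ‖d‖ ^ 2 := by
  have hL : 0 ≤ L := by linarith [one_div_nonneg.mp (hβ0.trans hβ)]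
  have hLβ : L * β ≤ 1 / 2 :=
    calc L * β ≤ L * (1 / (6 * L)) := mul_le_mul_of_nonneg_left hβ hL
      _ ≤ 1 / 2 := by
        rcases hL.eq_or_lt with rfl | hLpos
        · norm_num
        · field_simp; norm_num
  set g := gradient V θ
  have hdescent := le_add_inner_gradient_add_mul_norm_sq hL hV hLip θ (θ - β • (g + d))
  rw [sub_sub_cancel_left, inner_neg_right, norm_neg, real_inner_smul_right, norm_smul,
    inner_add_right, real_inner_self_eq_norm_sq, Real.norm_of_nonneg hβ0] at hdescent
  have hquadratic := mul_le_mul_of_nonneg_left (neg_inner_add_mul_norm_add_sq_le g d hLβ) hβ0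
  linear_combination hdescent + hquadratic

/-- One-step inexact gradient descent bound underlying the actor analysis:
if `V` has `L`-Lipschitz gradient and `0 ≤ β ≤ 1/(6L)`, then
`V(θ − β(∇V(θ) + d)) ≤ V(θ) − (β/4)‖∇V(θ)‖² + β‖d‖²`. -/
theorem inexact_gradient_descent_step (n : ℕ) (L : ℝ) (hL : 0 < L)
    (V : EuclideanSpace ℝ (Fin n) → ℝ) (hV : Differentiable ℝ V)
    (hLip : ∀ x y : EuclideanSpace ℝ (Fin n),
      ‖gradient V x - gradient V y‖ ≤ L * ‖x - y‖)
    (θ d : EuclideanSpace ℝ (Fin n)) (β : ℝ) (hβ0 : 0 ≤ β) (hβ : β ≤ 1 / (6 * L)) :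
    V (θ - β • (gradient V θ + d))
      ≤ V θ - (β / 4) * ‖gradient V θ‖ ^ 2 + β * ‖d‖ ^ 2 :=
  inexact_gradient_descent_step_general n L V hV hLip θ d β hβ0 hβ
end

section
/- Let V : ℝⁿ → ℝ be differentiable with L-Lipschitz gradient (L > 0), let θ, d ∈ ℝⁿ, let β be a real number with 0 ≤ β ≤ 1/(6L), let (Ω, μ) be a probability space, and let w : Ω → ℝⁿ be a random vector with ∫ w dμ = 0 and ∫ ‖w‖² dμ ≤ σ². Then ∫ V(θ − β·(∇V(θ) + d + w)) dμ ≤ V(θ) − (β/4)·‖∇V(θ)‖² + β·‖d‖² + (3/2)·L·β²·σ². -/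
/-!
The mean value inequality on `[x, x + v]` and the Lipschitz gradient give the two-sided bound
`|V (x + v) - V x - ⟪∇V x, v⟫| ≤ L ‖v‖²` (the constant `L` rather than `L / 2` leaves enough room),
which also makes `V (θ - β (∇V θ + d + w))` integrable. In expectation the zero-mean noise drops
out of the linear term and adds only `∫ ‖w‖²` to the quadratic one; the remaining deterministic
inequality follows from `L β ≤ 1 / 6` and `|⟪∇V θ, d⟫| ≤ ‖∇V θ‖ ‖d‖`.
-/

open MeasureTheory RealInnerProductSpace

section

variable {E : Type*} [NormedAddCommGroup E] [InnerProductSpace ℝ E] {V : E → ℝ} {L : ℝ}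
  {Ω : Type*} [MeasurableSpace Ω] {μ : Measure Ω}

lemma norm_fderiv_sub_le_of_gradient [CompleteSpace E]
    (hLip : ∀ x y : E, ‖gradient V x - gradient V y‖ ≤ L * ‖x - y‖) (x y : E) :
    ‖fderiv ℝ V x - fderiv ℝ V y‖ ≤ L * ‖x - y‖ := by
  simpa only [gradient, LinearIsometryEquiv.apply_symm_apply, ← map_sub,
    LinearIsometryEquiv.norm_map] using hLip x y

lemma abs_sub_sub_inner_gradient_le [CompleteSpace E] (hV : Differentiable ℝ V) (hL : 0 ≤ L)
    (hLip : ∀ x y : E, ‖gradient V x - gradient V y‖ ≤ L * ‖x - y‖) (x v : E) :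
    |V (x + v) - V x - ⟪gradient V x, v⟫| ≤ L * ‖v‖ ^ 2 := by
  have hderiv : ∀ z ∈ segment ℝ x (x + v), ‖fderiv ℝ V z - fderiv ℝ V x‖ ≤ L * ‖v‖ := by
    rw [segment_eq_image']
    rintro _ ⟨t, ⟨ht0, ht1⟩, rfl⟩
    calc ‖fderiv ℝ V (x + t • (x + v - x)) - fderiv ℝ V x‖
        ≤ L * (t * ‖v‖) := by
          simpa only [add_sub_cancel_left, norm_smul, Real.norm_eq_abs, abs_of_nonneg ht0]
            using norm_fderiv_sub_le_of_gradient hLip (x + t • v) x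
      _ ≤ L * ‖v‖ := by gcongr; exact mul_le_of_le_one_left (norm_nonneg v) ht1
  have hmvt := (convex_segment x (x + v)).norm_image_sub_le_of_norm_fderiv_le'
    (fun z _ => hV z) hderiv (left_mem_segment ℝ x (x + v)) (right_mem_segment ℝ x (x + v))
  rw [add_sub_cancel_left] at hmvt
  rw [gradient, InnerProductSpace.toDual_symm_apply, ← Real.norm_eq_abs, sq, ← mul_assoc]
  exact hmvt

lemma integral_comp_add_le [CompleteSpace E] [IsProbabilityMeasure μ] (hV : Differentiable ℝ V)
    (hL : 0 ≤ L) (hLip : ∀ x y : E, ‖gradient V x - gradient V y‖ ≤ L * ‖x - y‖) (x : E)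
    {u : Ω → E} (hu : Integrable u μ) (husq : Integrable (fun ω => ‖u ω‖ ^ 2) μ) :
    ∫ ω, V (x + u ω) ∂μ ≤ V x + ⟪gradient V x, ∫ ω, u ω ∂μ⟫ + L * ∫ ω, ‖u ω‖ ^ 2 ∂μ := by
  have hquad := fun ω => abs_le.mp (abs_sub_sub_inner_gradient_le hV hL hLip x (u ω))
  have hinner : Integrable (fun ω => ⟪gradient V x, u ω⟫) μ := hu.const_inner _
  have haffine : Integrable (fun ω => V x + ⟪gradient V x, u ω⟫) μ :=
    (integrable_const _).add hinner
  have hcomp : Integrable (fun ω => V (x + u ω)) μ := by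
    refine Integrable.mono' (g := fun ω => |V x| + |⟪gradient V x, u ω⟫| + L * ‖u ω‖ ^ 2)
      (((integrable_const _).add hinner.abs).add (husq.const_mul L))
      (hV.continuous.comp_aestronglyMeasurable (aestronglyMeasurable_const.add
        hu.aestronglyMeasurable)) (Filter.Eventually.of_forall fun ω => ?_)
    rw [Real.norm_eq_abs, abs_le]
    constructor <;> linarith [hquad ω, le_abs_self (V x), neg_abs_le (V x),
      le_abs_self ⟪gradient V x, u ω⟫, neg_abs_le ⟪gradient V x, u ω⟫]
  calc ∫ ω, V (x + u ω) ∂μ ≤ ∫ ω, V x + ⟪gradient V x, u ω⟫ + L * ‖u ω‖ ^ 2 ∂μ :=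
        integral_mono hcomp (haffine.add (husq.const_mul L)) fun ω => by linarith [hquad ω]
    _ = V x + ⟪gradient V x, ∫ ω, u ω ∂μ⟫ + L * ∫ ω, ‖u ω‖ ^ 2 ∂μ := by
        rw [integral_add haffine (husq.const_mul L), integral_add (integrable_const _) hinner,
          integral_inner hu, integral_const_mul]
        simp

lemma integrable_norm_const_add_sq [IsFiniteMeasure μ] (a : E) {w : Ω → E}
    (hw : Integrable w μ) (hwsq : Integrable (fun ω => ‖w ω‖ ^ 2) μ) :
    Integrable (fun ω => ‖a + w ω‖ ^ 2) μ := by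
  simp_rw [norm_add_sq_real]
  exact ((integrable_const _).add ((hw.const_inner a).const_mul 2)).add hwsq

lemma integral_norm_const_add_sq [CompleteSpace E] [IsProbabilityMeasure μ] (a : E) {w : Ω → E}
    (hw : Integrable w μ) (hwsq : Integrable (fun ω => ‖w ω‖ ^ 2) μ)
    (hmean : ∫ ω, w ω ∂μ = 0) :
    ∫ ω, ‖a + w ω‖ ^ 2 ∂μ = ‖a‖ ^ 2 + ∫ ω, ‖w ω‖ ^ 2 ∂μ := by
  have hcross : Integrable (fun ω => 2 * ⟪a, w ω⟫) μ := (hw.const_inner a).const_mul 2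
  have haffine : Integrable (fun ω => ‖a‖ ^ 2 + 2 * ⟪a, w ω⟫) μ :=
    (integrable_const _).add hcross
  simp_rw [norm_add_sq_real]
  rw [integral_add haffine hwsq, integral_add (integrable_const _) hcross,
    integral_const_mul, integral_inner hw, hmean]
  simp

lemma integral_comp_sub_smul_le [CompleteSpace E] [IsProbabilityMeasure μ]
    (hV : Differentiable ℝ V) (hL : 0 ≤ L)
    (hLip : ∀ x y : E, ‖gradient V x - gradient V y‖ ≤ L * ‖x - y‖) (x a : E) (β : ℝ)
    {w : Ω → E} (hw : Integrable w μ) (hwsq : Integrable (fun ω => ‖w ω‖ ^ 2) μ)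
    (hmean : ∫ ω, w ω ∂μ = 0) :
    ∫ ω, V (x - β • (a + w ω)) ∂μ
      ≤ V x - β * ⟪gradient V x, a⟫ + L * β ^ 2 * (‖a‖ ^ 2 + ∫ ω, ‖w ω‖ ^ 2 ∂μ) := by
  have hstep := integral_comp_add_le (μ := μ) hV hL hLip x (u := fun ω => (-β) • (a + w ω))
    (((integrable_const a).add hw).smul (-β))
    (by simpa only [norm_smul, mul_pow, Real.norm_eq_abs, sq_abs, neg_sq] using
      (integrable_norm_const_add_sq a hw hwsq).const_mul (β ^ 2))
  have hmean_step : ∫ ω, (-β) • (a + w ω) ∂μ = (-β) • a := by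
    rw [integral_smul, integral_add (integrable_const a) hw, hmean]
    simp
  have hsq_step : ∫ ω, ‖(-β) • (a + w ω)‖ ^ 2 ∂μ = β ^ 2 * (‖a‖ ^ 2 + ∫ ω, ‖w ω‖ ^ 2 ∂μ) := by
    simp only [norm_smul, mul_pow, Real.norm_eq_abs, sq_abs, neg_sq]
    rw [integral_const_mul, integral_norm_const_add_sq a hw hwsq hmean]
  rw [hmean_step, hsq_step, real_inner_smul_right] at hstep
  simp only [neg_smul, ← sub_eq_add_neg] at hstep
  linarith

lemma neg_inner_add_quadratic_le (g d : E) {β s σ : ℝ} (hL : 0 ≤ L) (hβ : 0 ≤ β)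
    (hLβ : L * β ≤ 1 / 6) (hs : s ≤ σ ^ 2) :
    -(β * ⟪g, g + d⟫) + L * β ^ 2 * (‖g + d‖ ^ 2 + s)
      ≤ -(β / 4 * ‖g‖ ^ 2) + β * ‖d‖ ^ 2 + 3 / 2 * L * β ^ 2 * σ ^ 2 := by
  have hcross := neg_le_of_abs_le (abs_real_inner_le_norm g d)
  have hdrift : L * β ^ 2 * ‖g + d‖ ^ 2 ≤ β / 6 * ‖g + d‖ ^ 2 := by
    gcongr
    nlinarith
  have hnoise : L * β ^ 2 * s ≤ 3 / 2 * L * β ^ 2 * σ ^ 2 := by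
    have : 0 ≤ L * β ^ 2 * σ ^ 2 := by positivity
    have : L * β ^ 2 * s ≤ L * β ^ 2 * σ ^ 2 := by gcongr
    linarith
  rw [norm_add_sq_real] at hdrift
  rw [inner_add_right, real_inner_self_eq_norm_sq, norm_add_sq_real]
  linarith [mul_nonneg hβ (sq_nonneg (‖g‖ - ‖d‖)), mul_le_mul_of_nonneg_left hcross hβ,
    mul_nonneg hβ (sq_nonneg ‖g‖), mul_nonneg hβ (sq_nonneg ‖d‖)]

end

/-- Expected one-step descent bound of the actor update: if `V` has `L`-Lipschitz
gradient, `0 ≤ β ≤ 1/(6L)`, and `w` is a zero-mean random vector with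
`E‖w‖² ≤ σ²` on a probability space, then
`E[V(θ − β(∇V(θ) + d + w))] ≤ V(θ) − (β/4)‖∇V(θ)‖² + β‖d‖² + (3/2)Lβ²σ²`. -/
theorem expected_inexact_sgd_step (n : ℕ) (L σ : ℝ) (hL : 0 < L)
    (V : EuclideanSpace ℝ (Fin n) → ℝ) (hV : Differentiable ℝ V)
    (hLip : ∀ x y : EuclideanSpace ℝ (Fin n),
      ‖gradient V x - gradient V y‖ ≤ L * ‖x - y‖)
    (θ d : EuclideanSpace ℝ (Fin n)) (β : ℝ) (hβ0 : 0 ≤ β) (hβ : β ≤ 1 / (6 * L))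
    {Ω : Type*} [MeasurableSpace Ω] (μ : Measure Ω) [IsProbabilityMeasure μ]
    (w : Ω → EuclideanSpace ℝ (Fin n))
    (hwint : Integrable w μ)
    (hwsq : Integrable (fun ω => ‖w ω‖ ^ 2) μ)
    (hmean : ∫ ω, w ω ∂μ = 0)
    (hvar : ∫ ω, ‖w ω‖ ^ 2 ∂μ ≤ σ ^ 2) :
    ∫ ω, V (θ - β • (gradient V θ + d + w ω)) ∂μ
      ≤ V θ - (β / 4) * ‖gradient V θ‖ ^ 2 + β * ‖d‖ ^ 2
        + (3 / 2) * L * β ^ 2 * σ ^ 2 := by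
  have hLβ : L * β ≤ 1 / 6 := by
    rw [le_div_iff₀ (by positivity)] at hβ
    linarith
  calc ∫ ω, V (θ - β • (gradient V θ + d + w ω)) ∂μ
      ≤ V θ - β * ⟪gradient V θ, gradient V θ + d⟫
          + L * β ^ 2 * (‖gradient V θ + d‖ ^ 2 + ∫ ω, ‖w ω‖ ^ 2 ∂μ) :=
        integral_comp_sub_smul_le hV hL.le hLip θ _ β hwint hwsq hmean
    _ ≤ _ := by linarith [neg_inner_add_quadratic_le (gradient V θ) d hL.le hβ0 hLβ hvar]
end

section
/- Let P be an n×n row-stochastic matrix, let ρ ∈ ℝⁿ be a stationary distribution of P (entries nonnegative, summing to 1, with ρᵀP = ρᵀ) satisfying ρᵢ ≥ p for all i, where p > 0, let γ ∈ [0,1), let D = diag(ρ), let Φ be a real n×k matrix, and set A = Φᵀ D (γP − I) Φ. Then for every x ∈ ℝᵏ, xᵀAx ≤ −(1−γ)·p·‖Φx‖². In particular, if Φ has full column rank (i.e. Φx = 0 only for x = 0), then there exists μ > 0 such that xᵀAx ≤ −(μ/2)·‖x‖² for all x ∈ ℝᵏ. -/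
/-!
Stationarity makes `P` a contraction for the `ρ`-weighted norm `‖y‖²_ρ = ∑ ρᵢ yᵢ²`: Jensen on
each row gives `(Py)ᵢ² ≤ (P y²)ᵢ`, and `ρᵀP = ρᵀ` sums this to `‖Py‖²_ρ ≤ ‖y‖²_ρ`. By AM–GM,
`⟨y, Py⟩_ρ ≤ (‖y‖²_ρ + ‖Py‖²_ρ)/2 ≤ ‖y‖²_ρ`, so `yᵀD(γP − I)y ≤ −(1 − γ)‖y‖²_ρ ≤ −(1 − γ)p‖y‖²`,
applied to `y = Φx`. For injective `Φ`, finite dimensionality gives `‖Φx‖ ≥ c‖x‖` with `c > 0`.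
-/

open scoped Matrix

namespace Matrix

theorem dotProduct_transpose_mul_mul_mulVec {m n R : Type*} [Fintype m] [Fintype n]
    [CommSemiring R] (Φ : Matrix m n R) (M : Matrix m m R) (x : n → R) :
    x ⬝ᵥ (Φᵀ * M * Φ) *ᵥ x = (Φ *ᵥ x) ⬝ᵥ M *ᵥ (Φ *ᵥ x) := by
  rw [← mulVec_mulVec, ← mulVec_mulVec, dotProduct_mulVec, vecMul_transpose]

variable {ι : Type*} [Fintype ι]

theorem sq_mulVec_le_mulVec_sq {P : Matrix ι ι ℝ} (hP : ∀ i j, 0 ≤ P i j)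
    (hrow : ∀ i, ∑ j, P i j = 1) (y : ι → ℝ) : (P *ᵥ y) ^ 2 ≤ P *ᵥ (y ^ 2) := fun i => by
  simpa [mulVec, dotProduct] using
    (even_two.convexOn_pow (𝕜 := ℝ)).map_sum_le (t := .univ) (p := y) (fun j _ => hP i j) (hrow i)
      (fun j _ => Set.mem_univ _)

theorem dotProduct_sq_mulVec_le_of_vecMul_eq {P : Matrix ι ι ℝ} {ρ : ι → ℝ}
    (hP : ∀ i j, 0 ≤ P i j) (hrow : ∀ i, ∑ j, P i j = 1) (hρ0 : ∀ i, 0 ≤ ρ i)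
    (hstat : ρ ᵥ* P = ρ) (y : ι → ℝ) : ρ ⬝ᵥ (P *ᵥ y) ^ 2 ≤ ρ ⬝ᵥ y ^ 2 :=
  calc ρ ⬝ᵥ (P *ᵥ y) ^ 2 ≤ ρ ⬝ᵥ P *ᵥ (y ^ 2) :=
        dotProduct_le_dotProduct_of_nonneg_left (sq_mulVec_le_mulVec_sq hP hrow y) hρ0
    _ = ρ ⬝ᵥ y ^ 2 := by rw [dotProduct_mulVec, hstat]

theorem dotProduct_mul_mulVec_le_of_vecMul_eq {P : Matrix ι ι ℝ} {ρ : ι → ℝ}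
    (hP : ∀ i j, 0 ≤ P i j) (hrow : ∀ i, ∑ j, P i j = 1) (hρ0 : ∀ i, 0 ≤ ρ i)
    (hstat : ρ ᵥ* P = ρ) (y : ι → ℝ) : (ρ * y) ⬝ᵥ P *ᵥ y ≤ ρ ⬝ᵥ y ^ 2 := by
  have hamgm : (ρ * y) ⬝ᵥ P *ᵥ y ≤ (ρ ⬝ᵥ y ^ 2 + ρ ⬝ᵥ (P *ᵥ y) ^ 2) / 2 := by
    simp only [dotProduct, Pi.mul_apply, Pi.pow_apply, ← Finset.sum_add_distrib,
      Finset.sum_div]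
    gcongr with i
    nlinarith [mul_nonneg (hρ0 i) (sq_nonneg (y i - (P *ᵥ y) i))]
  linarith [dotProduct_sq_mulVec_le_of_vecMul_eq hP hrow hρ0 hstat y]

variable [DecidableEq ι]

theorem dotProduct_diagonal_mul_smul_sub_one_mulVec_le {P : Matrix ι ι ℝ} {ρ : ι → ℝ} {γ : ℝ}
    (hP : ∀ i j, 0 ≤ P i j) (hrow : ∀ i, ∑ j, P i j = 1) (hρ0 : ∀ i, 0 ≤ ρ i)
    (hstat : ρ ᵥ* P = ρ) (hγ0 : 0 ≤ γ) (y : ι → ℝ) :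
    y ⬝ᵥ (diagonal ρ * (γ • P - 1)) *ᵥ y ≤ -(1 - γ) * (ρ ⬝ᵥ y ^ 2) := by
  have hexpand :
      y ⬝ᵥ (diagonal ρ * (γ • P - 1)) *ᵥ y = γ * ((ρ * y) ⬝ᵥ P *ᵥ y) - ρ ⬝ᵥ y ^ 2 := by
    simp only [← mulVec_mulVec, sub_mulVec, smul_mulVec, one_mulVec, dotProduct, mulVec_diagonal,
      Finset.mul_sum, ← Finset.sum_sub_distrib, Pi.mul_apply, Pi.pow_apply, Pi.sub_apply,
      Pi.smul_apply, smul_eq_mul]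
    exact Finset.sum_congr rfl fun i _ => by ring
  rw [hexpand]
  have hcontract := dotProduct_mul_mulVec_le_of_vecMul_eq hP hrow hρ0 hstat y
  linarith [mul_le_mul_of_nonneg_left hcontract hγ0]

end Matrix

theorem LinearMap.exists_pos_mul_norm_le_norm_of_ker_eq_bot {E F : Type*}
    [NormedAddCommGroup E] [NormedSpace ℝ E] [FiniteDimensional ℝ E]
    [NormedAddCommGroup F] [NormedSpace ℝ F] (f : E →ₗ[ℝ] F) (hf : LinearMap.ker f = ⊥) :
    ∃ c > 0, ∀ x, c * ‖x‖ ≤ ‖f x‖ := by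
  obtain ⟨K, hK0, hK⟩ := f.exists_antilipschitzWith hf
  refine ⟨(K : ℝ)⁻¹, by positivity, fun x => ?_⟩
  rw [inv_mul_le_iff₀ (by positivity)]
  simpa using hK.le_mul_dist x 0

theorem Matrix.exists_pos_mul_norm_le_norm_mulVec {m n : Type*} [Fintype m] [Fintype n]
    [DecidableEq n] {Φ : Matrix m n ℝ} (hΦ : ∀ x, Φ *ᵥ x = 0 → x = 0) :
    ∃ c > 0, ∀ x : EuclideanSpace ℝ n,
      c * ‖x‖ ≤ ‖(WithLp.toLp 2 (Φ *ᵥ x) : EuclideanSpace ℝ m)‖ :=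
  (toLpLin 2 2 Φ).exists_pos_mul_norm_le_norm_of_ker_eq_bot <|
    LinearMap.ker_eq_bot'.2 fun x hx => by
      simpa using congrArg (WithLp.toLp 2) (hΦ x.ofLp (by simpa using congrArg WithLp.ofLp hx))

theorem EuclideanSpace.mul_norm_sq_le_dotProduct_sq {ι : Type*} [Fintype ι] {ρ : ι → ℝ} {p : ℝ}
    (hρp : ∀ i, p ≤ ρ i) (y : EuclideanSpace ℝ ι) : p * ‖y‖ ^ 2 ≤ ρ ⬝ᵥ y.ofLp ^ 2 := by
  rw [EuclideanSpace.real_norm_sq_eq, Finset.mul_sum]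
  exact Finset.sum_le_sum fun i _ => mul_le_mul_of_nonneg_right (hρp i) (sq_nonneg _)

theorem exploration_of_positive_probabilities_general (n k : ℕ)
    (P : Matrix (Fin n) (Fin n) ℝ) (ρ : Fin n → ℝ) (p γ : ℝ) (hp : 0 < p)
    (hP : ∀ i j, 0 ≤ P i j) (hrow : ∀ i, ∑ j, P i j = 1)
    (hρ0 : ∀ i, 0 ≤ ρ i)
    (hstat : Matrix.vecMul ρ P = ρ)
    (hρp : ∀ i, p ≤ ρ i)
    (hγ0 : 0 ≤ γ) (hγ1 : γ < 1)
    (Φ : Matrix (Fin n) (Fin k) ℝ) :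
    (∀ x : EuclideanSpace ℝ (Fin k),
        x ⬝ᵥ (Φ.transpose * Matrix.diagonal ρ * (γ • P - 1) * Φ).mulVec x
          ≤ -((1 - γ) * p) *
              ‖(show EuclideanSpace ℝ (Fin n) from WithLp.toLp 2 (Φ.mulVec x))‖ ^ 2) ∧
    ((∀ x : Fin k → ℝ, Φ.mulVec x = 0 → x = 0) →
      ∃ μ > 0, ∀ x : EuclideanSpace ℝ (Fin k),
        x ⬝ᵥ (Φ.transpose * Matrix.diagonal ρ * (γ • P - 1) * Φ).mulVec x
          ≤ -(μ / 2) * ‖x‖ ^ 2) := by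
  have hbound : ∀ x : EuclideanSpace ℝ (Fin k),
      x ⬝ᵥ (Φᵀ * Matrix.diagonal ρ * (γ • P - 1) * Φ) *ᵥ x
        ≤ -((1 - γ) * p) * ‖(WithLp.toLp 2 (Φ *ᵥ x) : EuclideanSpace ℝ (Fin n))‖ ^ 2 := by
    intro x
    rw [Matrix.mul_assoc Φᵀ, Matrix.dotProduct_transpose_mul_mul_mulVec]
    have hdecay := Matrix.dotProduct_diagonal_mul_smul_sub_one_mulVec_le hP hrow hρ0 hstat hγ0
      (Φ *ᵥ x)
    have hweight := EuclideanSpace.mul_norm_sq_le_dotProduct_sq hρp (WithLp.toLp 2 (Φ *ᵥ x))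
    linarith [mul_le_mul_of_nonneg_left hweight (sub_nonneg.2 hγ1.le)]
  refine ⟨hbound, fun hΦ => ?_⟩
  obtain ⟨c, hc, hcΦ⟩ := Matrix.exists_pos_mul_norm_le_norm_mulVec hΦ
  have hγp : 0 < (1 - γ) * p := mul_pos (by linarith) hp
  refine ⟨2 * ((1 - γ) * p * c ^ 2), by positivity, fun x => (hbound x).trans ?_⟩
  have hsq : (c * ‖x‖) ^ 2 ≤ ‖(WithLp.toLp 2 (Φ *ᵥ x) : EuclideanSpace ℝ (Fin n))‖ ^ 2 :=
    pow_le_pow_left₀ (by positivity) (hcΦ x) 2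
  calc -((1 - γ) * p) * ‖(WithLp.toLp 2 (Φ *ᵥ x) : EuclideanSpace ℝ (Fin n))‖ ^ 2
      ≤ -((1 - γ) * p) * (c * ‖x‖) ^ 2 := mul_le_mul_of_nonpos_left hsq (by linarith)
    _ = -(2 * ((1 - γ) * p * c ^ 2) / 2) * ‖x‖ ^ 2 := by ring

/-- Proposition 2 of the paper: for a row-stochastic `P` with stationary
distribution `ρ` satisfying `ρᵢ ≥ p > 0`, `γ ∈ [0,1)`, `D = diag(ρ)` and a feature
matrix `Φ`, the mean TD matrix `A = Φᵀ D (γP − I) Φ` satisfies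
`xᵀAx ≤ −(1−γ)p‖Φx‖²` for all `x`; if moreover `Φ` has full column rank, then
there exists `μ > 0` with `xᵀAx ≤ −(μ/2)‖x‖²` for all `x`. -/
theorem exploration_of_positive_probabilities (n k : ℕ)
    (P : Matrix (Fin n) (Fin n) ℝ) (ρ : Fin n → ℝ) (p γ : ℝ) (hp : 0 < p)
    (hP : ∀ i j, 0 ≤ P i j) (hrow : ∀ i, ∑ j, P i j = 1)
    (hρ0 : ∀ i, 0 ≤ ρ i) (hρ1 : ∑ i, ρ i = 1)
    (hstat : Matrix.vecMul ρ P = ρ)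
    (hρp : ∀ i, p ≤ ρ i)
    (hγ0 : 0 ≤ γ) (hγ1 : γ < 1)
    (Φ : Matrix (Fin n) (Fin k) ℝ) :
    (∀ x : EuclideanSpace ℝ (Fin k),
        x ⬝ᵥ (Φ.transpose * Matrix.diagonal ρ * (γ • P - 1) * Φ).mulVec x
          ≤ -((1 - γ) * p) *
              ‖(show EuclideanSpace ℝ (Fin n) from WithLp.toLp 2 (Φ.mulVec x))‖ ^ 2) ∧
    ((∀ x : Fin k → ℝ, Φ.mulVec x = 0 → x = 0) →
      ∃ μ > 0, ∀ x : EuclideanSpace ℝ (Fin k),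
        x ⬝ᵥ (Φ.transpose * Matrix.diagonal ρ * (γ • P - 1) * Φ).mulVec x
          ≤ -(μ / 2) * ‖x‖ ^ 2) :=
  exploration_of_positive_probabilities_general n k P ρ p γ hp hP hrow hρ0 hstat hρp hγ0 hγ1 Φ
end
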